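/- Let d ≥ 2 and N ≥ 2, and for i = 1,…,d−1 define P_i : ℂ → ℂ by P_i(α) = ∑_{k=2}^N α^{i·d^{N−k}}. Consider the family of functions from ℂ to ℂ consisting of α ↦ α^j for j = 0,…,d^{N−1}−1 together with α ↦ α^j·P_i(α) for j = 0,…,d^{N−1}−1 and i = 1,…,d−1. The ℂ-linear span of this family in the space of functions ℂ → ℂ has dimension exactly 2d^{N−1} − d^{N−2}. -/

import Mathlib

open Polynomial

/-- Evaluation of polynomials as a linear map into functions. -/
noncomputable def evalFunL : ℂ[X] →ₗ[ℂ] (ℂ → ℂ) where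
  toFun p := fun α => p.eval α
  map_add' p q := by funext α; simp
  map_smul' c p := by funext α; simp

theorem stmt14 (d N : ℕ) (hd : 2 ≤ d) (hN : 2 ≤ N) :
    Module.finrank ℂ (Submodule.span ℂ (Set.range
      (fun p : Fin d × Fin (d ^ (N - 1)) => fun α : ℂ =>
        α ^ (p.2 : ℕ) *
          (if (p.1 : ℕ) = 0 then 1
           else ∑ t ∈ Finset.range (N - 1), α ^ ((p.1 : ℕ) * d ^ t)))))
      = 2 * d ^ (N - 1) - d ^ (N - 2) := by
  classical
  set F : Fin d × Fin (d ^ (N - 1)) → (ℂ → ℂ) :=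
    (fun p : Fin d × Fin (d ^ (N - 1)) => fun α : ℂ =>
        α ^ (p.2 : ℕ) *
          (if (p.1 : ℕ) = 0 then 1
           else ∑ t ∈ Finset.range (N - 1), α ^ ((p.1 : ℕ) * d ^ t))) with hF
  set M : ℕ := 2 * d ^ (N - 1) - d ^ (N - 2) with hM
  set a : ℕ := d ^ (N - 2) with ha
  have hapos : 0 < a := Nat.pow_pos (by omega)
  have hb : d ^ (N - 1) = d * a := by
    rw [ha, ← pow_succ']
    congr 1
    omega
  have hab : a ≤ d * a := Nat.le_mul_of_pos_left a (by omega)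
  have hd1a : (d - 1) * a = d * a - a := by
    rw [Nat.sub_mul, one_mul]
  have hM' : M = (2 * d - 1) * a := by
    rw [hM, hb, Nat.sub_mul, one_mul, ← mul_assoc]
  have hle : d ^ (N - 1) ≤ M := by
    rw [hM', hb]
    exact Nat.mul_le_mul_right a (by omega)
  -- key inequality: exponents appearing are < M
  have hexp : ∀ (i j t : ℕ), i < d → j < d ^ (N - 1) → t ≤ N - 2 →
      j + i * d ^ t < M := by
    intro i j t hi hj ht
    have h1 : i * d ^ t ≤ (d - 1) * a :=
      Nat.mul_le_mul (by omega) (Nat.pow_le_pow_right (by omega) ht)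
    rw [hb] at hj
    rw [hM', Nat.sub_mul, one_mul, two_mul, Nat.add_mul]
    omega
  -- injectivity of evaluation
  have hinj : Function.Injective evalFunL := by
    intro p q h
    exact Polynomial.funext fun r => congrFun h r
  -- the span equals the image of degreeLT ℂ M
  have key : Submodule.span ℂ (Set.range F) = (degreeLT ℂ M).map evalFunL := by
    apply le_antisymm
    · rw [Submodule.span_le]
      rintro _ ⟨⟨i, j⟩, rfl⟩
      set Q : ℂ[X] :=
        if (i : ℕ) = 0 then X ^ (j : ℕ)
        else ∑ t ∈ Finset.range (N - 1), X ^ ((j : ℕ) + (i : ℕ) * d ^ t) with hQ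
      refine ⟨Q, ?_, ?_⟩
      · rw [hQ]
        split_ifs with h0
        · refine mem_degreeLT.2 ?_
          rw [degree_X_pow]
          exact_mod_cast lt_of_lt_of_le j.2 hle
        · refine Submodule.sum_mem _ fun t ht => ?_
          refine mem_degreeLT.2 ?_
          rw [degree_X_pow]
          exact_mod_cast Nat.cast_lt.2
            (hexp i j t i.2 j.2 (by simp only [Finset.mem_range] at ht; omega))
      · show (fun α : ℂ => Q.eval α) = F (i, j)
        funext α
        rw [hF, hQ]
        simp only
        split_ifs with h0
        · simp
        · simp [eval_finset_sum, pow_add, Finset.mul_sum]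
    · -- every monomial α^m with m < M lies in the span
      have hmono : ∀ m, m < M → (fun α : ℂ => α ^ m) ∈ Submodule.span ℂ (Set.range F) := by
        intro m
        induction m using Nat.strong_induction_on with
        | _ m ih =>
          intro hm
          by_cases h1 : m < d ^ (N - 1)
          · have hmem : F (⟨0, by omega⟩, ⟨m, h1⟩) ∈ Set.range F := Set.mem_range_self _
            have heq : F (⟨0, by omega⟩, ⟨m, h1⟩) = fun α : ℂ => α ^ m := by
              funext α; simp [hF]
            rw [← heq]
            exact Submodule.subset_span hmem
          · push_neg at h1
            set q : ℕ := m / a with hq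
            set i : ℕ := q - (d - 1) with hi
            have hqd : d ≤ q := (Nat.le_div_iff_mul_le hapos).2 (by rw [← hb]; exact h1)
            have hqu : q < 2 * d - 1 := by
              rw [hq]
              exact Nat.div_lt_iff_lt_mul hapos |>.2 (by rw [← hM']; exact hm)
            have hipos : i ≠ 0 := by omega
            have hilt : i < d := by omega
            have hqam : q * a ≤ m := by rw [hq]; exact Nat.div_mul_le_self m a
            have hia : i * a = q * a - (d - 1) * a := by rw [hi, Nat.sub_mul]
            set j : ℕ := m - i * a with hj
            have hmr : a * q + m % a = m := Nat.div_add_mod m a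
            have hra : m % a < a := Nat.mod_lt _ hapos
            have hiam : i * a ≤ m := by
              have : (d - 1) * a ≤ q * a := Nat.mul_le_mul_right a (by omega)
              omega
            have hda : d * a ≤ q * a := Nat.mul_le_mul_right a hqd
            have hjlt : j < d ^ (N - 1) := by
              rw [hb, hj]
              have hqa : q * a = a * q := Nat.mul_comm q a
              omega
            have hmeq : j + i * a = m := by omega
            -- the decomposition
            have hdec : (fun α : ℂ => α ^ m) =
                F (⟨i, hilt⟩, ⟨j, hjlt⟩) -
                  ∑ t ∈ Finset.range (N - 2), (fun α : ℂ => α ^ (j + i * d ^ t)) := by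
              funext α
              have hN1 : N - 1 = (N - 2) + 1 := by omega
              have hms : α ^ (j : ℕ) * ∑ t ∈ Finset.range (N - 1), α ^ (i * d ^ t)
                  = ∑ t ∈ Finset.range (N - 1), α ^ (j + i * d ^ t) := by
                rw [Finset.mul_sum]
                simp_rw [← pow_add]
              simp only [hF, Pi.sub_apply, Finset.sum_apply, if_neg hipos]
              rw [hms, hN1, Finset.sum_range_succ, ← ha, hmeq]
              ring
            rw [hdec]
            refine Submodule.sub_mem _ (Submodule.subset_span (Set.mem_range_self _)) ?_
            refine Submodule.sum_mem _ fun t ht => ?_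
            have htlt : t < N - 2 := Finset.mem_range.1 ht
            have hlt : j + i * d ^ t < m := by
              have : i * d ^ t < i * a :=
                mul_lt_mul_of_pos_left
                  (Nat.pow_lt_pow_right (by omega) htlt) (show 0 < i by omega)
              omega
            exact ih _ hlt (lt_trans hlt hm)
      rw [degreeLT_eq_span_X_pow, Submodule.map_span, Submodule.span_le]
      rintro _ ⟨p, hp, rfl⟩
      simp only [Finset.coe_image, Set.mem_image, Finset.mem_coe, Finset.mem_range] at hp
      obtain ⟨m, hm, rfl⟩ := hp
      have : evalFunL (X ^ m) = fun α : ℂ => α ^ m := by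
        funext α; simp [evalFunL]
      rw [this]
      exact hmono m hm
  rw [key]
  rw [← LinearEquiv.finrank_eq (Submodule.equivMapOfInjective evalFunL hinj (degreeLT ℂ M))]
  rw [LinearEquiv.finrank_eq (Polynomial.degreeLTEquiv ℂ M)]
  exact Module.finrank_fin_fun ℂ
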